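/- Let p be a prime and 1 ≤ n ≤ p − 1, r = p − n. Let λ ∈ ℤ^r be a degree-zero admissible weight (λ_1 ≥ … ≥ λ_r, Σ λ_i = 0, λ_1 − λ_r ≤ p − r) with associated pair of partitions (α, β), and let D(λ) ∈ ℤ^n be the degree-zero weight with associated pair (α^t, β^t). Then Σ_{i=1}^r λ_i(λ_i + r + 1 − 2i) + Σ_{j=1}^n D(λ)_j(D(λ)_j + n + 1 − 2j) ≡ 0 (mod p); that is, ⟨λ + 2ρ^{(r)}, λ⟩ ≡ −⟨D(λ) + 2ρ^{(n)}, D(λ)⟩ (mod p). -/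
import Mathlib


/-- The pair `(α, β)` associated to a weight `λ ∈ ℤ^n`: `α` is the tuple of
positive entries of `λ` and `β` is the tuple of negated negative entries of
`λ` taken in reverse order. -/
def toPair (n : ℕ) (l : Fin n → ℤ) : List ℤ × List ℤ :=
  ((List.ofFn l).filter (fun x => decide (0 < x)),
   (((List.ofFn l).filter (fun x => decide (x < 0))).reverse).map (fun x => -x))

/-- The transpose of a partition: `(α^t)_j = #{ i : α_i ≥ j }` for
`j = 1, …, α_1`. -/
def transposeP (a : List ℤ) : List ℤ :=
  (List.range a.headI.toNat).map
    (fun j => ((a.filter (fun x => decide ((j : ℤ) + 1 ≤ x))).length : ℤ))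

/-- The degree-zero weight in `ℤ^k` associated to a pair of partitions
`(α, β)`: the entries of `α`, then zeros, then the negated entries of `β`
in reverse order. -/
def weightOfPair (k : ℕ) (ab : List ℤ × List ℤ) : Fin k → ℤ :=
  fun i =>
    if h : (i : ℕ) < ab.1.length then ab.1.get ⟨(i : ℕ), h⟩
    else if h2 : k - 1 - (i : ℕ) < ab.2.length then
      -(ab.2.get ⟨k - 1 - (i : ℕ), h2⟩)
    else 0

/-- Degree-zero admissible weights for `GL_k` in `Ver_p`: weakly decreasing,
summing to zero, with `λ_1 - λ_k ≤ p - k` (stated equivalently as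
`l i - l j ≤ p - k` for all `i, j`). -/
def DZAdm (p k : ℕ) : Set (Fin k → ℤ) :=
  {l | (∀ i j : Fin k, i ≤ j → l j ≤ l i) ∧ (∑ i, l i) = 0 ∧
    ∀ i j : Fin k, l i - l j ≤ (p : ℤ) - k}

/-- The level-rank duality map `D`: if `λ` has associated pair of partitions
`(α, β)`, then `D(λ)` is the degree-zero weight in `ℤ^{p-r}` with associated
pair `(α^t, β^t)`. -/
def levelRankD (p r : ℕ) (l : Fin r → ℤ) : Fin (p - r) → ℤ :=
  weightOfPair (p - r) (transposeP (toPair r l).1, transposeP (toPair r l).2)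

open Finset

def tP (a : List ℤ) (j : ℕ) : ℤ :=
  ((a.filter (fun x => decide ((j : ℤ) + 1 ≤ x))).length : ℤ)

lemma filter_length_eq_sum (P : ℤ → Bool) (a : List ℤ) :
    ((a.filter P).length : ℤ) =
      ∑ i ∈ Finset.range a.length, (if P (a.getD i 0) then (1:ℤ) else 0) := by
  induction a with
  | nil => simp
  | cons x a ih =>
    rw [List.filter_cons]
    simp only [List.length_cons, Finset.sum_range_succ', List.getD_cons_succ,
      List.getD_cons_zero]
    rw [← ih]
    by_cases h : P x
    · rw [if_pos h, if_pos h, List.length_cons]; push_cast; ring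
    · rw [if_neg h, if_neg h, add_zero]

lemma sum_g_t (a : List ℤ) (h0 : ∀ x ∈ a, 0 ≤ x) (hmax : ∀ x ∈ a, x ≤ a.headI)
    (g : ℕ → ℤ) :
    ∑ j ∈ range a.headI.toNat, g j * tP a j
      = ∑ i ∈ range a.length, ∑ j ∈ range (a.getD i 0).toNat, g j := by
  have h1 : ∀ j, tP a j
      = ∑ i ∈ range a.length, (if (j:ℤ)+1 ≤ a.getD i 0 then (1:ℤ) else 0) := by
    intro j; rw [tP, filter_length_eq_sum]; simp
  calc ∑ j ∈ range a.headI.toNat, g j * tP a j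
      = ∑ j ∈ range a.headI.toNat, ∑ i ∈ range a.length,
          (if (j:ℤ)+1 ≤ a.getD i 0 then g j else 0) := by
        refine Finset.sum_congr rfl fun j _ => ?_
        rw [h1, Finset.mul_sum]
        exact Finset.sum_congr rfl fun i _ => by split <;> ring
    _ = ∑ i ∈ range a.length, ∑ j ∈ range a.headI.toNat,
          (if (j:ℤ)+1 ≤ a.getD i 0 then g j else 0) := Finset.sum_comm
    _ = _ := by
        refine Finset.sum_congr rfl fun i hi => ?_
        rw [Finset.mem_range] at hi
        have hmem : a.getD i 0 ∈ a := by
          rw [List.getD_eq_getElem a 0 hi]; exact List.getElem_mem hi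
        have h0' := h0 _ hmem
        have hle : (a.getD i 0).toNat ≤ a.headI.toNat := by
          have := hmax _ hmem; omega
        rw [← Finset.sum_subset (Finset.range_subset_range.2 hle) (fun j hj hj' => ?_)]
        · refine Finset.sum_congr rfl fun j hj => ?_
          rw [Finset.mem_range] at hj
          rw [if_pos (by omega)]
        · rw [Finset.mem_range] at hj hj'
          rw [if_neg (by omega)]

lemma tP_eq_sum (a : List ℤ) (j : ℕ) :
    tP a j = ∑ i ∈ range a.length, (if (j:ℤ)+1 ≤ a.getD i 0 then (1:ℤ) else 0) := by
  rw [tP, filter_length_eq_sum]; simp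

lemma count_min (x y : ℤ) (hx : 0 ≤ x) (hy : 0 ≤ y) :
    ∑ j ∈ range x.toNat, (if (j:ℤ)+1 ≤ y then (1:ℤ) else 0) = min x y := by
  have hsub : range (min x.toNat y.toNat) ⊆ range x.toNat := Finset.range_subset_range.2 (by omega)
  rw [← Finset.sum_subset hsub (fun j hj hj' => by
    rw [Finset.mem_range] at hj hj'; rw [if_neg (by omega)])]
  have h2 : ∀ j ∈ range (min x.toNat y.toNat), (if (j:ℤ)+1 ≤ y then (1:ℤ) else 0) = 1 := by
    intro j hj; rw [Finset.mem_range] at hj; rw [if_pos (by omega)]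
  rw [Finset.sum_congr rfl h2, Finset.sum_const, Finset.card_range, nsmul_eq_mul, mul_one]
  rcases le_total x y with h | h
  · rw [min_eq_left (show x.toNat ≤ y.toNat by omega), min_eq_left h]; omega
  · rw [min_eq_right (show y.toNat ≤ x.toNat by omega), min_eq_right h]; omega

lemma inner_t (a : List ℤ) (x : ℤ) (hx : 0 ≤ x) (h0 : ∀ x ∈ a, 0 ≤ x) :
    ∑ j ∈ range x.toNat, tP a j = ∑ i' ∈ range a.length, min x (a.getD i' 0) := by
  rw [Finset.sum_congr rfl (fun j _ => tP_eq_sum a j), Finset.sum_comm]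
  refine Finset.sum_congr rfl fun i' hi' => ?_
  rw [Finset.mem_range] at hi'
  have hmem : a.getD i' 0 ∈ a := by
    rw [List.getD_eq_getElem a 0 hi']; exact List.getElem_mem hi'
  exact count_min x _ hx (h0 _ hmem)

lemma sum_min_sorted (a : List ℤ)
    (hsort : ∀ i j : ℕ, i ≤ j → j < a.length → a.getD j 0 ≤ a.getD i 0) :
    ∑ i ∈ range a.length, ∑ i' ∈ range a.length, min (a.getD i 0) (a.getD i' 0)
      = ∑ i ∈ range a.length, (2*(i:ℤ)+1) * a.getD i 0 := by
  have key : ∀ i ∈ range a.length, ∀ i' ∈ range a.length,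
      min (a.getD i 0) (a.getD i' 0)
        = (if i' ≤ i then a.getD i 0 else 0) + (if i < i' then a.getD i' 0 else 0) := by
    intro i hi i' hi'; rw [mem_range] at hi hi'
    rcases le_or_gt i' i with h | h
    · rw [if_pos h, if_neg (by omega), add_zero, min_eq_left (hsort i' i h hi)]
    · rw [if_neg (by omega), if_pos h, zero_add, min_eq_right (hsort i i' h.le hi')]
  rw [Finset.sum_congr rfl fun i hi => Finset.sum_congr rfl fun i' hi' => key i hi i' hi']
  rw [Finset.sum_congr rfl fun i (hi : i ∈ range a.length) => Finset.sum_add_distrib,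
    Finset.sum_add_distrib]
  have e1 : ∀ i ∈ range a.length,
      (∑ i' ∈ range a.length, if i' ≤ i then a.getD i 0 else 0)
        = ((i:ℤ)+1) * a.getD i 0 := by
    intro i hi; rw [mem_range] at hi
    have hsub : range (i+1) ⊆ range a.length := Finset.range_subset_range.2 (by omega)
    rw [← Finset.sum_subset hsub (fun j hj hj' => by
      rw [Finset.mem_range] at hj hj'; rw [if_neg (by omega)])]
    have h2 : ∀ j ∈ range (i+1), (if j ≤ i then a.getD i 0 else 0) = a.getD i 0 := by
      intro j hj; rw [Finset.mem_range] at hj; rw [if_pos (by omega)]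
    rw [Finset.sum_congr rfl h2, Finset.sum_const, Finset.card_range, nsmul_eq_mul]
    push_cast; ring
  have e2 : ∑ i ∈ range a.length, ∑ i' ∈ range a.length, (if i < i' then a.getD i' 0 else 0)
      = ∑ i' ∈ range a.length, (i':ℤ) * a.getD i' 0 := by
    rw [Finset.sum_comm]
    refine Finset.sum_congr rfl fun i' hi' => ?_
    rw [mem_range] at hi'
    have hsub : range i' ⊆ range a.length := Finset.range_subset_range.2 (by omega)
    rw [← Finset.sum_subset hsub (fun j hj hj' => by
      rw [Finset.mem_range] at hj hj'; rw [if_neg (by omega)])]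
    have h2 : ∀ j ∈ range i', (if j < i' then a.getD i' 0 else 0) = a.getD i' 0 := by
      intro j hj; rw [Finset.mem_range] at hj; rw [if_pos (by omega)]
    rw [Finset.sum_congr rfl h2, Finset.sum_const, Finset.card_range, nsmul_eq_mul]
  rw [Finset.sum_congr rfl e1, e2, ← Finset.sum_add_distrib]
  exact Finset.sum_congr rfl fun i _ => by ring

def Ssum (c : List ℤ) : ℤ := ∑ i ∈ Finset.range c.length, c.getD i 0
def Gsum (c : List ℤ) : ℤ :=
  ∑ i ∈ Finset.range c.length, c.getD i 0 * (c.getD i 0 - 1 - 2*(i:ℤ))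

lemma transposeP_eq (a : List ℤ) :
    transposeP a = (List.range a.headI.toNat).map (fun j : ℕ => tP a j) := by
  unfold transposeP
  rw [bind_pure_comp, List.map_eq_map, List.map_map]
  rfl

lemma length_transposeP (a : List ℤ) : (transposeP a).length = a.headI.toNat := by
  rw [transposeP_eq, List.length_map, List.length_range]

lemma getD_transposeP (a : List ℤ) (j : ℕ) (hj : j < a.headI.toNat) :
    (transposeP a).getD j 0 = tP a j := by
  rw [List.getD_eq_getElem _ _ (by rw [length_transposeP]; exact hj)]
  simp only [transposeP_eq, List.getElem_map, List.getElem_range]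

lemma sum_range_two_mul (k : ℕ) : ∑ j ∈ range k, (2*(j:ℤ)) = (k:ℤ)*k - k := by
  induction k with
  | zero => simp
  | succ k ih => rw [Finset.sum_range_succ, ih]; push_cast; ring

lemma SL_transposeP (a : List ℤ) (h1 : ∀ x ∈ a, 1 ≤ x) (hmax : ∀ x ∈ a, x ≤ a.headI) :
    Ssum (transposeP a) = Ssum a := by
  have h0 : ∀ x ∈ a, 0 ≤ x := fun x hx => le_trans (by norm_num) (h1 x hx)
  rw [Ssum, length_transposeP,
    Finset.sum_congr rfl (fun j hj => getD_transposeP a j (Finset.mem_range.1 hj))]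
  have key := sum_g_t a h0 hmax (fun _ => (1:ℤ))
  simp only [one_mul] at key
  rw [key, Ssum]
  refine Finset.sum_congr rfl fun i hi => ?_
  rw [Finset.mem_range] at hi
  have hmem : a.getD i 0 ∈ a := by
    rw [List.getD_eq_getElem a 0 hi]; exact List.getElem_mem hi
  have := h0 _ hmem
  rw [Finset.sum_const, Finset.card_range, nsmul_eq_mul, mul_one]
  omega

lemma GL_transposeP (a : List ℤ) (h1 : ∀ x ∈ a, 1 ≤ x) (hmax : ∀ x ∈ a, x ≤ a.headI)
    (hsort : ∀ i j : ℕ, i ≤ j → j < a.length → a.getD j 0 ≤ a.getD i 0) :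
    Gsum (transposeP a) = - Gsum a := by
  have h0 : ∀ x ∈ a, 0 ≤ x := fun x hx => le_trans (by norm_num) (h1 x hx)
  have hgetmem : ∀ i, i < a.length → a.getD i 0 ∈ a := by
    intro i hi; rw [List.getD_eq_getElem a 0 hi]; exact List.getElem_mem hi
  rw [Gsum, length_transposeP,
    Finset.sum_congr rfl (fun j hj => by
      rw [getD_transposeP a j (Finset.mem_range.1 hj)])]
  have split : ∀ j ∈ range a.headI.toNat,
      tP a j * (tP a j - 1 - 2*(j:ℤ))
        = tP a j * tP a j + (-1) * tP a j + (-(2*(j:ℤ))) * tP a j := by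
    intro j _; ring
  rw [Finset.sum_congr rfl split, Finset.sum_add_distrib, Finset.sum_add_distrib]
  -- quadratic part
  have hq : ∑ j ∈ range a.headI.toNat, tP a j * tP a j
      = ∑ i ∈ range a.length, (2*(i:ℤ)+1) * a.getD i 0 := by
    rw [sum_g_t a h0 hmax (tP a), ← sum_min_sorted a hsort]
    refine Finset.sum_congr rfl fun i hi => ?_
    rw [Finset.mem_range] at hi
    exact inner_t a _ (h0 _ (hgetmem i hi)) h0
  -- linear part
  have hl : ∑ j ∈ range a.headI.toNat, (-1:ℤ) * tP a j
      = ∑ i ∈ range a.length, (-1:ℤ) * a.getD i 0 := by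
    rw [sum_g_t a h0 hmax (fun _ => (-1:ℤ))]
    refine Finset.sum_congr rfl fun i hi => ?_
    rw [Finset.mem_range] at hi
    have := h0 _ (hgetmem i hi)
    rw [Finset.sum_const, Finset.card_range, nsmul_eq_mul]
    have : ((a.getD i 0).toNat : ℤ) = a.getD i 0 := by omega
    rw [this]; ring
  -- quadratic-in-value part
  have hj2 : ∑ j ∈ range a.headI.toNat, (-(2*(j:ℤ))) * tP a j
      = ∑ i ∈ range a.length, (-(a.getD i 0 * a.getD i 0 - a.getD i 0)) := by
    have e : ∑ j ∈ range a.headI.toNat, (2*(j:ℤ)) * tP a j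
        = ∑ i ∈ range a.length, (a.getD i 0 * a.getD i 0 - a.getD i 0) := by
      rw [sum_g_t a h0 hmax (fun j => 2*(j:ℤ))]
      refine Finset.sum_congr rfl fun i hi => ?_
      rw [Finset.mem_range] at hi
      have := h0 _ (hgetmem i hi)
      rw [sum_range_two_mul]
      have h' : (((a.getD i 0).toNat : ℕ) : ℤ) = a.getD i 0 := by omega
      rw [h']
    calc ∑ j ∈ range a.headI.toNat, (-(2*(j:ℤ))) * tP a j
        = -∑ j ∈ range a.headI.toNat, (2*(j:ℤ)) * tP a j := by
          rw [← Finset.sum_neg_distrib]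
          exact Finset.sum_congr rfl fun j _ => by ring
      _ = _ := by rw [e, ← Finset.sum_neg_distrib]
  rw [hq, hl, hj2, ← Finset.sum_add_distrib, ← Finset.sum_add_distrib]
  unfold Gsum
  rw [← Finset.sum_neg_distrib]
  exact Finset.sum_congr rfl fun i _ => by ring

def Fsum (k : ℕ) (c : List ℤ) : ℤ :=
  ∑ i ∈ Finset.range c.length, c.getD i 0 * (c.getD i 0 + (k:ℤ) - 1 - 2*(i:ℤ))

lemma Fsum_eq (k : ℕ) (c : List ℤ) : Fsum k c = Gsum c + k * Ssum c := by
  unfold Fsum Gsum Ssum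
  rw [Finset.mul_sum, ← Finset.sum_add_distrib]
  exact Finset.sum_congr rfl fun i _ => by ring

lemma sum_F_weightOfPair (m : ℕ) (A B : List ℤ) (hlen : A.length + B.length ≤ m) :
    ∑ j : Fin m, (weightOfPair m (A, B)) j
        * ((weightOfPair m (A, B)) j + (m:ℤ) - 1 - 2*((j:ℕ):ℤ))
      = Fsum m A + Fsum m B := by
  set ν : ℕ → ℤ := fun j =>
    if h : j < A.length then A.get ⟨j, h⟩
    else if h2 : m - 1 - j < B.length then -(B.get ⟨m - 1 - j, h2⟩) else 0 with hν
  have hw : ∀ j : Fin m, weightOfPair m (A, B) j = ν (j : ℕ) := fun j => rfl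
  have hstep : ∑ j : Fin m, (weightOfPair m (A, B)) j
        * ((weightOfPair m (A, B)) j + (m:ℤ) - 1 - 2*((j:ℕ):ℤ))
      = ∑ j ∈ range m, ν j * (ν j + (m:ℤ) - 1 - 2*(j:ℤ)) := by
    rw [← Fin.sum_univ_eq_sum_range (fun j : ℕ => ν j * (ν j + (m:ℤ) - 1 - 2*(j:ℤ))) m]
    exact Finset.sum_congr rfl fun j _ => by rw [hw]
  rw [hstep]
  have hA : A.length ≤ m := by omega
  have hB : B.length ≤ m := by omega
  have key : ∀ j ∈ range m, ν j * (ν j + (m:ℤ) - 1 - 2*(j:ℤ))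
      = (if j < A.length then A.getD j 0 * (A.getD j 0 + (m:ℤ) - 1 - 2*(j:ℤ)) else 0)
        + (if m - B.length ≤ j then
            (-(B.getD (m-1-j) 0)) * ((-(B.getD (m-1-j) 0)) + (m:ℤ) - 1 - 2*(j:ℤ)) else 0) := by
    intro j hj
    rw [Finset.mem_range] at hj
    by_cases h : j < A.length
    · rw [hν]
      simp only [dif_pos h]
      rw [if_pos h, if_neg (by omega), add_zero, List.get_eq_getElem,
        List.getD_eq_getElem A 0 h]
    · by_cases h2 : m - 1 - j < B.length
      · rw [hν]
        simp only [dif_neg h, dif_pos h2]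
        rw [if_neg h, if_pos (by omega), zero_add, List.get_eq_getElem,
          List.getD_eq_getElem B 0 h2]
      · rw [hν]
        simp only [dif_neg h, dif_neg h2]
        rw [if_neg h, if_neg (by omega), zero_mul, add_zero]
  rw [Finset.sum_congr rfl key, Finset.sum_add_distrib]
  have e1 : ∑ j ∈ range m,
      (if j < A.length then A.getD j 0 * (A.getD j 0 + (m:ℤ) - 1 - 2*(j:ℤ)) else 0)
      = Fsum m A := by
    rw [← Finset.sum_subset (Finset.range_subset_range.2 hA) (fun j hj hj' => by
      rw [Finset.mem_range] at hj hj'; rw [if_neg (by omega)])]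
    refine Finset.sum_congr rfl fun j hj => ?_
    rw [Finset.mem_range] at hj
    rw [if_pos hj]
  have e2 : ∑ j ∈ range m,
      (if m - B.length ≤ j then
        (-(B.getD (m-1-j) 0)) * ((-(B.getD (m-1-j) 0)) + (m:ℤ) - 1 - 2*(j:ℤ)) else 0)
      = Fsum m B := by
    rw [← Finset.sum_range_reflect]
    have e3 : ∀ k ∈ range m,
        (if m - B.length ≤ m - 1 - k then
          (-(B.getD (m-1-(m-1-k)) 0))
            * ((-(B.getD (m-1-(m-1-k)) 0)) + (m:ℤ) - 1 - 2*((m-1-k : ℕ):ℤ)) else 0)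
        = (if k < B.length then
            B.getD k 0 * (B.getD k 0 + (m:ℤ) - 1 - 2*(k:ℤ)) else 0) := by
      intro k hk
      rw [Finset.mem_range] at hk
      by_cases hkB : k < B.length
      · rw [if_pos (by omega), if_pos hkB]
        have hidx : m - 1 - (m - 1 - k) = k := by omega
        have hcast : ((m - 1 - k : ℕ) : ℤ) = (m:ℤ) - 1 - (k:ℤ) := by omega
        rw [hidx, hcast]; ring
      · rw [if_neg (by omega), if_neg hkB]
    rw [Finset.sum_congr rfl e3]
    rw [← Finset.sum_subset (Finset.range_subset_range.2 hB) (fun j hj hj' => by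
      rw [Finset.mem_range] at hj hj'; rw [if_neg (by omega)])]
    refine Finset.sum_congr rfl fun j hj => ?_
    rw [Finset.mem_range] at hj
    rw [if_pos hj]
  rw [e1, e2]

lemma lower_set_card {r : ℕ} (S : Finset (Fin r))
    (hS : ∀ i j : Fin r, i ≤ j → j ∈ S → i ∈ S) (i : Fin r) :
    i ∈ S ↔ (i : ℕ) < S.card := by
  constructor
  · intro hi
    have hsub : Finset.Iic i ⊆ S := fun j hj => hS j i (Finset.mem_Iic.1 hj) hi
    have := Finset.card_le_card hsub
    rw [Fin.card_Iic] at this; omega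
  · intro hi
    by_contra h
    have hsub : S ⊆ Finset.Iio i := fun j hj => by
      rw [Finset.mem_Iio]
      rcases lt_or_ge j i with h' | h'
      · exact h'
      · exact absurd (hS i j h' hj) h
    have := Finset.card_le_card hsub
    rw [Fin.card_Iio] at this; omega

lemma upper_set_card {r : ℕ} (S : Finset (Fin r))
    (hS : ∀ i j : Fin r, i ≤ j → i ∈ S → j ∈ S) (i : Fin r) :
    i ∈ S ↔ r - S.card ≤ (i : ℕ) := by
  have hcard : S.card ≤ r := by
    have := Finset.card_le_univ S
    simpa using this
  have hir : (i : ℕ) < r := i.isLt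
  constructor
  · intro hi
    have hsub : Finset.Ici i ⊆ S := fun j hj => hS i j (Finset.mem_Ici.1 hj) hi
    have := Finset.card_le_card hsub
    rw [Fin.card_Ici] at this; omega
  · intro hi
    by_contra h
    have hsub : S ⊆ Finset.Ioi i := fun j hj => by
      rw [Finset.mem_Ioi]
      rcases lt_or_ge i j with h' | h'
      · exact h'
      · exact absurd (hS j i h' hj) h
    have := Finset.card_le_card hsub
    rw [Fin.card_Ioi] at this; omega

lemma filter_ofFn_eq_take {r : ℕ} (l : Fin r → ℤ) (P : ℤ → Bool) (a : ℕ) (ha : a ≤ r)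
    (h : ∀ i : Fin r, P (l i) = true ↔ (i : ℕ) < a) :
    (List.ofFn l).filter P = (List.ofFn l).take a := by
  conv_lhs => rw [← List.take_append_drop a (List.ofFn l)]
  rw [List.filter_append]
  have h1 : ((List.ofFn l).take a).filter P = (List.ofFn l).take a := by
    rw [List.filter_eq_self]
    intro x hx
    rw [List.mem_iff_getElem] at hx
    obtain ⟨k, hk, rfl⟩ := hx
    have hk' : k < r := by
      simp only [List.length_take, List.length_ofFn] at hk; omega
    have hka : k < a := by
      simp only [List.length_take, List.length_ofFn] at hk; omega
    rw [List.getElem_take, List.getElem_ofFn]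
    exact (h _).2 hka
  have h2 : ((List.ofFn l).drop a).filter P = [] := by
    rw [List.filter_eq_nil_iff]
    intro x hx
    rw [List.mem_iff_getElem] at hx
    obtain ⟨k, hk, rfl⟩ := hx
    rw [List.getElem_drop, List.getElem_ofFn]
    intro hP
    have := (h _).1 hP
    simp only [Fin.val_mk] at this
    omega
  rw [h1, h2, List.append_nil]

lemma filter_ofFn_eq_drop {r : ℕ} (l : Fin r → ℤ) (P : ℤ → Bool) (a : ℕ) (ha : a ≤ r)
    (h : ∀ i : Fin r, P (l i) = true ↔ a ≤ (i : ℕ)) :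
    (List.ofFn l).filter P = (List.ofFn l).drop a := by
  conv_lhs => rw [← List.take_append_drop a (List.ofFn l)]
  rw [List.filter_append]
  have h1 : ((List.ofFn l).take a).filter P = [] := by
    rw [List.filter_eq_nil_iff]
    intro x hx
    rw [List.mem_iff_getElem] at hx
    obtain ⟨k, hk, rfl⟩ := hx
    have hka : k < a := by
      simp only [List.length_take, List.length_ofFn] at hk; omega
    rw [List.getElem_take, List.getElem_ofFn]
    intro hP
    have := (h _).1 hP
    simp only [Fin.val_mk] at this
    omega
  have h2 : ((List.ofFn l).drop a).filter P = (List.ofFn l).drop a := by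
    rw [List.filter_eq_self]
    intro x hx
    rw [List.mem_iff_getElem] at hx
    obtain ⟨k, hk, rfl⟩ := hx
    rw [List.getElem_drop, List.getElem_ofFn]
    refine (h _).2 ?_
    simp only [Fin.val_mk]
    omega
  rw [h1, h2, List.nil_append]

lemma headI_eq_getD (s : List ℤ) (hs : s ≠ []) : s.headI = s.getD 0 0 := by
  cases s with
  | nil => exact absurd rfl hs
  | cons y t => rfl

/-- For a degree-zero admissible weight `λ ∈ ℤ^r` with `r = p - n`, one has
`⟨λ + 2ρ^{(r)}, λ⟩ + ⟨D(λ) + 2ρ^{(n)}, D(λ)⟩ ≡ 0 (mod p)`, where `D(λ) ∈ ℤ^n`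
(note `n = p - r`) is the level-rank dual weight, and for `λ ∈ ℤ^k` (1-based)
`⟨λ + 2ρ^{(k)}, λ⟩ = Σ_i λ_i (λ_i + k + 1 - 2i)` (in 0-based indexing
`Σ_i λ_i (λ_i + k - 1 - 2i)`). -/
theorem level_rank_casimir_congruence
    (p n r : ℕ) (hp : p.Prime) (hn : 1 ≤ n) (hnp : n ≤ p - 1) (hr : r = p - n)
    (l : Fin r → ℤ) (hl : l ∈ DZAdm p r) :
    (∑ i : Fin r, l i * (l i + (r : ℤ) - 1 - 2 * ((i : ℕ) : ℤ))) +
      (∑ j : Fin (p - r),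
        levelRankD p r l j *
          (levelRankD p r l j + (n : ℤ) - 1 - 2 * ((j : ℕ) : ℤ)))
      ≡ 0 [ZMOD (p : ℤ)] := by
  obtain ⟨hmono, hsum0, hgap⟩ := hl
  have hp2 : 2 ≤ p := hp.two_le
  have hr1 : 1 ≤ r := by omega
  have hrp : r ≤ p := by omega
  have hmn : p - r = n := by omega
  -- positive part cardinality
  obtain ⟨a, hposchar, har⟩ :
      ∃ a : ℕ, (∀ i : Fin r, 0 < l i ↔ (i : ℕ) < a) ∧ a ≤ r := by
    refine ⟨(Finset.univ.filter (fun i : Fin r => 0 < l i)).card, ?_, ?_⟩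
    · intro i
      rw [← lower_set_card _ (fun i j hij hj => ?_) i]
      · simp
      · simp only [Finset.mem_filter, Finset.mem_univ, true_and] at *
        exact lt_of_lt_of_le hj (hmono i j hij)
    · have := Finset.card_filter_le Finset.univ (fun i : Fin r => 0 < l i)
      simpa using this
  obtain ⟨c, hnegchar, hcr⟩ :
      ∃ c : ℕ, (∀ i : Fin r, l i < 0 ↔ r - c ≤ (i : ℕ)) ∧ c ≤ r := by
    refine ⟨(Finset.univ.filter (fun i : Fin r => l i < 0)).card, ?_, ?_⟩
    · intro i
      rw [← upper_set_card _ (fun i j hij hj => ?_) i]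
      · simp
      · simp only [Finset.mem_filter, Finset.mem_univ, true_and] at *
        exact lt_of_le_of_lt (hmono i j hij) hj
    · have := Finset.card_filter_le Finset.univ (fun i : Fin r => l i < 0)
      simpa using this
  have hac : a + c ≤ r := by
    by_contra hcon
    push_neg at hcon
    have h1 : 0 < l ⟨r - c, by omega⟩ := (hposchar _).2 (by simp; omega)
    have h2 : l ⟨r - c, by omega⟩ < 0 := (hnegchar _).2 (by simp)
    omega
  have hkra : ∀ k : ℕ, k < a → k < r := fun k hk => by omega
  have hkrr : ∀ k : ℕ, r - 1 - k < r := fun k => by omega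
  set A := (toPair r l).1 with hA
  set B := (toPair r l).2 with hB
  have hAfil : A = (List.ofFn l).filter (fun x => decide (0 < x)) := rfl
  have hLRD : levelRankD p r l = weightOfPair (p - r) (transposeP A, transposeP B) := rfl
  clear_value A B
  have hAeq : A = (List.ofFn l).take a := by
    rw [hAfil]
    exact filter_ofFn_eq_take l _ a har
      (fun i => by rw [decide_eq_true_eq]; exact hposchar i)
  have hNeq : (List.ofFn l).filter (fun x => decide (x < 0))
      = (List.ofFn l).drop (r - c) := by
    refine filter_ofFn_eq_drop l _ (r - c) (by omega)
      (fun i => by rw [decide_eq_true_eq]; exact (hnegchar i))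
  have hBeq : B = (((List.ofFn l).drop (r - c)).reverse).map (fun x => -x) := by
    rw [hB, toPair, hNeq]
  have hAlen : A.length = a := by
    rw [hAeq, List.length_take, List.length_ofFn]; omega
  have hBlen : B.length = c := by
    rw [hBeq, List.length_map, List.length_reverse, List.length_drop,
      List.length_ofFn]; omega
  have hAget : ∀ k, ∀ hk : k < a, A.getD k 0 = l ⟨k, hkra k hk⟩ := by
    intro k hk
    rw [hAeq, List.getD_eq_getElem _ _ (by rw [List.length_take, List.length_ofFn]; omega),
      List.getElem_take, List.getElem_ofFn]
  have hBget : ∀ k, ∀ hk : k < c, B.getD k 0 = -l ⟨r - 1 - k, hkrr k⟩ := by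
    intro k hk
    rw [hBeq, List.getD_eq_getElem _ _ (by
      rw [List.length_map, List.length_reverse, List.length_drop, List.length_ofFn]; omega)]
    rw [List.getElem_map, List.getElem_reverse, List.getElem_drop, List.getElem_ofFn]
    refine congrArg Neg.neg (congrArg l (Fin.ext ?_))
    simp only [Fin.val_mk, List.length_drop, List.length_ofFn]
    omega
  have hi0 : (0:ℕ) < r := by omega
  have hiL : r - 1 < r := by omega
  have hA1 : ∀ x ∈ A, 1 ≤ x := by
    intro x hx
    rw [hAfil, List.mem_filter] at hx
    have := hx.2
    rw [decide_eq_true_eq] at this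
    omega
  have hB1 : ∀ x ∈ B, 1 ≤ x := by
    intro x hx
    rw [hBeq, List.mem_map] at hx
    obtain ⟨y, hy, rfl⟩ := hx
    rw [List.mem_reverse, ← hNeq, List.mem_filter] at hy
    have := hy.2
    rw [decide_eq_true_eq] at this
    omega
  have hAhead : 0 < a → A.headI = l ⟨0, hi0⟩ := by
    intro ha0
    have hne : A ≠ [] := by
      intro hnil; rw [hnil] at hAlen; simp at hAlen; omega
    rw [headI_eq_getD A hne, hAget 0 ha0]
  have hBhead : 0 < c → B.headI = -l ⟨r - 1, hiL⟩ := by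
    intro hc0
    have hne : B ≠ [] := by
      intro hnil; rw [hnil] at hBlen; simp at hBlen; omega
    rw [headI_eq_getD B hne, hBget 0 hc0]
    exact congrArg Neg.neg (congrArg l (Fin.ext rfl))
  have hAmax : ∀ x ∈ A, x ≤ A.headI := by
    intro x hx
    have hne : A ≠ [] := List.ne_nil_of_mem hx
    have ha0 : 0 < a := by
      rcases Nat.eq_zero_or_pos a with h | h
      · rw [h] at hAlen
        exact absurd (List.length_eq_zero_iff.1 hAlen) hne
      · exact h
    rw [hAhead ha0]
    have hx' : x ∈ List.ofFn l := by
      rw [hAfil, List.mem_filter] at hx; exact hx.1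
    rw [List.mem_ofFn] at hx'
    obtain ⟨i, rfl⟩ := hx'
    exact hmono ⟨0, hi0⟩ i (Fin.le_def.2 (by simp only [Fin.val_mk]; omega))
  have hBmax : ∀ x ∈ B, x ≤ B.headI := by
    intro x hx
    have hne : B ≠ [] := List.ne_nil_of_mem hx
    have hc0 : 0 < c := by
      rcases Nat.eq_zero_or_pos c with h | h
      · rw [h] at hBlen
        exact absurd (List.length_eq_zero_iff.1 hBlen) hne
      · exact h
    rw [hBhead hc0]
    rw [hBeq, List.mem_map] at hx
    obtain ⟨y, hy, rfl⟩ := hx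
    rw [List.mem_reverse, ← hNeq, List.mem_filter, List.mem_ofFn] at hy
    obtain ⟨⟨i, rfl⟩, _⟩ := hy
    have hi := i.isLt
    have := hmono i ⟨r - 1, hiL⟩ (Fin.le_def.2 (by simp only [Fin.val_mk]; omega))
    omega
  have hAsort : ∀ i j : ℕ, i ≤ j → j < A.length → A.getD j 0 ≤ A.getD i 0 := by
    intro i j hij hj
    rw [hAlen] at hj
    rw [hAget i (by omega), hAget j hj]
    exact hmono _ _ (Fin.mk_le_mk.2 hij)
  have hBsort : ∀ i j : ℕ, i ≤ j → j < B.length → B.getD j 0 ≤ B.getD i 0 := by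
    intro i j hij hj
    rw [hBlen] at hj
    rw [hBget i (by omega), hBget j hj]
    have := hmono ⟨r - 1 - j, hkrr j⟩ ⟨r - 1 - i, hkrr i⟩ (Fin.mk_le_mk.2 (by omega))
    omega
  have hl0 : 0 ≤ l ⟨0, hi0⟩ := by
    by_contra hneg
    push_neg at hneg
    have hsum_le : (∑ i, l i) ≤ ∑ _i : Fin r, l ⟨0, hi0⟩ :=
      Finset.sum_le_sum (fun i _ => hmono ⟨0, hi0⟩ i (Fin.le_def.2 (by simp only [Fin.val_mk]; omega)))
    rw [Finset.sum_const, Finset.card_univ, Fintype.card_fin, nsmul_eq_mul, hsum0] at hsum_le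
    have hmul : (r:ℤ) * l ⟨0, hi0⟩ < 0 :=
      mul_neg_of_pos_of_neg (by exact_mod_cast hr1) hneg
    omega
  have hlr1 : l ⟨r - 1, hiL⟩ ≤ 0 := by
    by_contra hneg
    push_neg at hneg
    have hsum_ge : (∑ _i : Fin r, l ⟨r - 1, hiL⟩) ≤ ∑ i, l i :=
      Finset.sum_le_sum (fun i _ => by
        have hi := i.isLt
        exact hmono i ⟨r - 1, hiL⟩ (Fin.le_def.2 (by simp only [Fin.val_mk]; omega)))
    rw [Finset.sum_const, Finset.card_univ, Fintype.card_fin, nsmul_eq_mul, hsum0] at hsum_ge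
    have hmul : 0 < (r:ℤ) * l ⟨r - 1, hiL⟩ :=
      mul_pos (by exact_mod_cast hr1) hneg
    omega
  have hgap0 : l ⟨0, hi0⟩ - l ⟨r - 1, hiL⟩ ≤ (p:ℤ) - r := hgap _ _
  have hmgap : l ⟨0, hi0⟩ - l ⟨r - 1, hiL⟩ ≤ ((p - r : ℕ) : ℤ) := by
    have hc : ((p - r : ℕ) : ℤ) = (p:ℤ) - r := by omega
    rw [hc]; exact hgap0
  have hlenT : (transposeP A).length + (transposeP B).length ≤ p - r := by
    rw [length_transposeP, length_transposeP]
    by_cases ha0 : 0 < a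
    · by_cases hc0 : 0 < c
      · rw [hAhead ha0, hBhead hc0]
        omega
      · have hBnil : B = [] := List.length_eq_zero_iff.1 (by omega)
        have hBh : B.headI = 0 := by rw [hBnil]; rfl
        rw [hAhead ha0, hBh]
        omega
    · have hAnil : A = [] := List.length_eq_zero_iff.1 (by omega)
      have hAh : A.headI = 0 := by rw [hAnil]; rfl
      have hl00 : l ⟨0, hi0⟩ ≤ 0 := by
        have := hposchar ⟨0, hi0⟩
        simp only [Fin.val_mk] at this
        omega
      by_cases hc0 : 0 < c
      · rw [hAh, hBhead hc0]
        omega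
      · have hBnil : B = [] := List.length_eq_zero_iff.1 (by omega)
        have hBh : B.headI = 0 := by rw [hBnil]; rfl
        rw [hAh, hBh]
        omega
  have hrecon : ∀ i : Fin r, weightOfPair r (A, B) i = l i := by
    intro i
    have hi := i.isLt
    unfold weightOfPair
    simp only
    by_cases h : (i:ℕ) < A.length
    · rw [dif_pos h, List.get_eq_getElem, ← List.getD_eq_getElem _ 0 h,
        hAget (i:ℕ) (by omega)]
    · rw [dif_neg h]
      by_cases h2 : r - 1 - (i:ℕ) < B.length
      · rw [dif_pos h2, List.get_eq_getElem, ← List.getD_eq_getElem _ 0 h2,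
          hBget (r - 1 - (i:ℕ)) (by omega), neg_neg]
        exact congrArg l (Fin.ext (by simp only [Fin.val_mk]; omega))
      · rw [dif_neg h2]
        have hp1 := hposchar i
        have hn1 := hnegchar i
        rw [hAlen] at h
        rw [hBlen] at h2
        omega
  have hLHS : (∑ i : Fin r, l i * (l i + (r : ℤ) - 1 - 2 * ((i : ℕ) : ℤ)))
      = Fsum r A + Fsum r B := by
    rw [← sum_F_weightOfPair r A B (by omega)]
    exact Finset.sum_congr rfl fun i _ => by rw [hrecon i]
  have hncast : (n:ℤ) = ((p - r : ℕ) : ℤ) := by omega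
  have hRHS : (∑ j : Fin (p - r), levelRankD p r l j *
        (levelRankD p r l j + (n : ℤ) - 1 - 2 * ((j : ℕ) : ℤ)))
      = Fsum (p - r) (transposeP A) + Fsum (p - r) (transposeP B) := by
    rw [← sum_F_weightOfPair (p - r) (transposeP A) (transposeP B) hlenT]
    refine Finset.sum_congr rfl fun j _ => ?_
    rw [hLRD, hncast]
  rw [hLHS, hRHS]
  have htot : Fsum r A + Fsum r B
        + (Fsum (p - r) (transposeP A) + Fsum (p - r) (transposeP B))
      = (p:ℤ) * (Ssum A + Ssum B) := by
    rw [Fsum_eq, Fsum_eq, Fsum_eq, Fsum_eq,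
      GL_transposeP A hA1 hAmax hAsort, SL_transposeP A hA1 hAmax,
      GL_transposeP B hB1 hBmax hBsort, SL_transposeP B hB1 hBmax]
    have hcast : ((p - r : ℕ) : ℤ) = (p:ℤ) - r := by omega
    rw [hcast]; ring
  rw [htot]
  exact Int.modEq_zero_iff_dvd.2 ⟨Ssum A + Ssum B, rfl⟩
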